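/- Grade K[x,y] over a field K by ℤ²/ℤ(1,−1), i.e. deg(x) = deg(y) = 1, and let ≺ be the lexicographic term order with x ≺ y. Let M = ⟨y⁵, x²⟩ and N = ⟨y², x⁵⟩. Then there are exactly three arrow maps f : Mon(M) → Mon(N) with respect to this grading and ≺. Every such f satisfies f(y²) = x², f(y³) = x²y, f(xy²) = x³, f(y⁴) = x²y², f(xy³) = x³y, f(x²y²) = x⁴, f(y⁵) = y⁵, f(x⁵) = x⁵, and f(m) = m for every m ∈ Mon(M) of degree at least 6; on the remaining degree-5 monomials, f is given by exactly one of: (i) f(xy⁴) = x²y³, f(x²y³) = x⁴y, f(x³y²) = x³y²; (ii) f(xy⁴) = x³y², f(x²y³) = x²y³, f(x³y²) = x⁴y; (iii) f(xy⁴) = x²y³, f(x²y³) = x³y², f(x³y²) = x⁴y. -/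
import Mathlib


open MvPolynomial

/-- A term order on the monomial exponents of `K[x₁,…,xₙ]`: a strict total order on
`Fin n →₀ ℕ` with `0` smallest and compatible with addition. -/
def IsTermOrder (n : ℕ) (lt : (Fin n →₀ ℕ) → (Fin n →₀ ℕ) → Prop) : Prop :=
  (∀ u v : Fin n →₀ ℕ, lt u v ∨ u = v ∨ lt v u) ∧
  (∀ u v w : Fin n →₀ ℕ, lt u v → lt v w → lt u w) ∧
  (∀ u : Fin n →₀ ℕ, ¬ lt u u) ∧
  (∀ u : Fin n →₀ ℕ, u ≠ 0 → lt 0 u) ∧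
  (∀ u v w : Fin n →₀ ℕ, lt u v → lt (u + w) (v + w))

/-- `u` is the exponent of the `lt`-leading monomial `in_≺(f)` of `f`. -/
def IsLeadExp {n : ℕ} {K : Type*} [Field K] (lt : (Fin n →₀ ℕ) → (Fin n →₀ ℕ) → Prop)
    (f : MvPolynomial (Fin n) K) (u : Fin n →₀ ℕ) : Prop :=
  u ∈ f.support ∧ ∀ v ∈ f.support, v ≠ u → lt v u

/-- The initial ideal `in_≺(I)`, generated by the leading monomials of nonzero elements. -/
noncomputable def initialIdeal {n : ℕ} {K : Type*} [Field K]
    (lt : (Fin n →₀ ℕ) → (Fin n →₀ ℕ) → Prop) (I : Ideal (MvPolynomial (Fin n) K)) :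
    Ideal (MvPolynomial (Fin n) K) :=
  Ideal.span { p | ∃ f ∈ I, ∃ u, IsLeadExp lt f u ∧ p = monomial u 1 }

/-- `DistRel c u v ℓ` says that `u - v = ℓ·c` in `ℤⁿ`; then `d(x^u, x^v) = |ℓ|`. -/
def DistRel {n : ℕ} (c : Fin n → ℤ) (u v : Fin n →₀ ℕ) (ℓ : ℤ) : Prop :=
  ∀ i, (u i : ℤ) - (v i : ℤ) = ℓ * c i

/-- Two monomials have the same degree in the `ℤⁿ/ℤc`-grading iff `u - v ∈ ℤc`. -/
def SameDeg {n : ℕ} (c : Fin n → ℤ) (u v : Fin n →₀ ℕ) : Prop :=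
  ∃ ℓ : ℤ, DistRel c u v ℓ

/-- A polynomial is homogeneous for the `ℤⁿ/ℤc`-grading if all of its monomials
have the same degree. -/
def CHom {n : ℕ} {K : Type*} [Field K] (c : Fin n → ℤ) (f : MvPolynomial (Fin n) K) : Prop :=
  ∀ u ∈ f.support, ∀ v ∈ f.support, SameDeg c u v

/-- An ideal is homogeneous for the `ℤⁿ/ℤc`-grading if it is generated by homogeneous
elements. -/
def CHomIdeal {n : ℕ} {K : Type*} [Field K] (c : Fin n → ℤ)
    (I : Ideal (MvPolynomial (Fin n) K)) : Prop :=
  ∃ G : Set (MvPolynomial (Fin n) K), (∀ g ∈ G, CHom c g) ∧ I = Ideal.span G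

/-- The exponent vector `c⁺` of a vector `c ∈ ℤⁿ`. -/
noncomputable def cpos {n : ℕ} (c : Fin n → ℤ) : Fin n →₀ ℕ :=
  Finsupp.equivFunOnFinite.symm fun i => (c i).toNat

/-- The exponent vector `c⁻` of a vector `c ∈ ℤⁿ`. -/
noncomputable def cneg {n : ℕ} (c : Fin n → ℤ) : Fin n →₀ ℕ :=
  Finsupp.equivFunOnFinite.symm fun i => (-(c i)).toNat

/-- `Mon M`: the set of (exponents of) monomials lying in `M`. -/
def Mon {n : ℕ} {K : Type*} [Field K] (M : Ideal (MvPolynomial (Fin n) K)) :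
    Set (Fin n →₀ ℕ) :=
  { u | monomial u 1 ∈ M }

/-- `f` (as a map on exponent vectors) restricts to an arrow map `Mon M → Mon N`
with respect to the `ℤⁿ/ℤc`-grading and the term order `lt`:
(1) it is a degree-preserving bijection with `m ⪰ f(m)`;
(2) `d(m', f(m')) ≤ d(m, f(m))` for every multiple `m'` of `m ∈ Mon M`;
(3) `d(f⁻¹(m'), m') ≤ d(f⁻¹(m), m)` for every `m ∈ Mon N` and multiple `m'` of `m`. -/
def IsArrowMap {n : ℕ} {K : Type*} [Field K] (c : Fin n → ℤ)
    (lt : (Fin n →₀ ℕ) → (Fin n →₀ ℕ) → Prop)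
    (M N : Ideal (MvPolynomial (Fin n) K)) (f : (Fin n →₀ ℕ) → (Fin n →₀ ℕ)) : Prop :=
  Set.BijOn f (Mon M) (Mon N) ∧
  (∀ u ∈ Mon M, SameDeg c u (f u)) ∧
  (∀ u ∈ Mon M, f u = u ∨ lt (f u) u) ∧
  (∀ u ∈ Mon M, ∀ (w : Fin n →₀ ℕ) (ℓ ℓ' : ℤ),
    DistRel c u (f u) ℓ → DistRel c (u + w) (f (u + w)) ℓ' → |ℓ'| ≤ |ℓ|) ∧
  (∀ u ∈ Mon M, ∀ u' ∈ Mon M, ∀ (w : Fin n →₀ ℕ) (ℓ ℓ' : ℤ),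
    f u' = f u + w → DistRel c u (f u) ℓ → DistRel c u' (f u') ℓ' → |ℓ'| ≤ |ℓ|)

/-- The exponent vector of the monomial `x^p y^q` in `K[x,y]`. -/
noncomputable def ev (p q : ℕ) : Fin 2 →₀ ℕ :=
  Finsupp.single 0 p + Finsupp.single 1 q

/-- The lexicographic term order on monomials of `K[x,y]` with `x ≺ y`. -/
def LexO : (Fin 2 →₀ ℕ) → (Fin 2 →₀ ℕ) → Prop :=
  fun u v => u 1 < v 1 ∨ (u 1 = v 1 ∧ u 0 < v 0)

/-- The values forced on every arrow map between the monomial ideals `⟨y⁵, x²⟩` and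
`⟨y², x⁵⟩` of `K[x,y]`: `f(y²) = x²`, `f(y³) = x²y`, `f(xy²) = x³`, `f(y⁴) = x²y²`,
`f(xy³) = x³y`, `f(x²y²) = x⁴`, `f(y⁵) = y⁵`, `f(x⁵) = x⁵`, and `f(m) = m` for every
`m` in the domain of degree at least `6`. -/
def ForcedValues {K : Type*} [Field K] (dom : Ideal (MvPolynomial (Fin 2) K))
    (f : (Fin 2 →₀ ℕ) → (Fin 2 →₀ ℕ)) : Prop :=
  f (ev 0 2) = ev 2 0 ∧ f (ev 0 3) = ev 2 1 ∧ f (ev 1 2) = ev 3 0 ∧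
  f (ev 0 4) = ev 2 2 ∧ f (ev 1 3) = ev 3 1 ∧ f (ev 2 2) = ev 4 0 ∧
  f (ev 0 5) = ev 0 5 ∧ f (ev 5 0) = ev 5 0 ∧
  ∀ u ∈ Mon dom, 6 ≤ u 0 + u 1 → f u = u

/-- Case (i): `f(xy⁴) = x²y³`, `f(x²y³) = x⁴y`, `f(x³y²) = x³y²`. -/
def CaseI (f : (Fin 2 →₀ ℕ) → (Fin 2 →₀ ℕ)) : Prop :=
  f (ev 1 4) = ev 2 3 ∧ f (ev 2 3) = ev 4 1 ∧ f (ev 3 2) = ev 3 2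

/-- Case (ii): `f(xy⁴) = x³y²`, `f(x²y³) = x²y³`, `f(x³y²) = x⁴y`. -/
def CaseII (f : (Fin 2 →₀ ℕ) → (Fin 2 →₀ ℕ)) : Prop :=
  f (ev 1 4) = ev 3 2 ∧ f (ev 2 3) = ev 2 3 ∧ f (ev 3 2) = ev 4 1

/-- Case (iii): `f(xy⁴) = x²y³`, `f(x²y³) = x³y²`, `f(x³y²) = x⁴y`. -/
def CaseIII (f : (Fin 2 →₀ ℕ) → (Fin 2 →₀ ℕ)) : Prop :=
  f (ev 1 4) = ev 2 3 ∧ f (ev 2 3) = ev 3 2 ∧ f (ev 3 2) = ev 4 1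


-- ########################################################################
-- ## Auxiliary material
-- ########################################################################

section Aux
open MvPolynomial

@[simp] lemma ev_zero (p q : ℕ) : ev p q 0 = p := by simp [ev]
@[simp] lemma ev_one (p q : ℕ) : ev p q 1 = q := by simp [ev]

lemma ext2 {u v : Fin 2 →₀ ℕ} (h0 : u 0 = v 0) (h1 : u 1 = v 1) : u = v := by
  ext i; fin_cases i <;> assumption

lemma ev_self (u : Fin 2 →₀ ℕ) : ev (u 0) (u 1) = u := ext2 (by simp) (by simp)

lemma evinj {a b p q : ℕ} (h : ev a b = ev p q) : a = p ∧ b = q :=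
  ⟨by simpa using congrArg (fun w => w 0) h, by simpa using congrArg (fun w => w 1) h⟩

lemma le2 {a b : ℕ} {u : Fin 2 →₀ ℕ} : ev a b ≤ u ↔ a ≤ u 0 ∧ b ≤ u 1 := by
  constructor
  · intro h; exact ⟨by simpa using h 0, by simpa using h 1⟩
  · intro ⟨h0, h1⟩ i; fin_cases i <;> simpa

lemma mon_span {K : Type*} [Field K] (v₁ v₂ u : Fin 2 →₀ ℕ) :
    u ∈ Mon (Ideal.span {monomial v₁ (1:K), monomial v₂ 1}) ↔ v₁ ≤ u ∨ v₂ ≤ u := by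
  have himg : ({monomial v₁ 1, monomial v₂ 1} : Set (MvPolynomial (Fin 2) K))
      = (fun s => monomial s (1:K)) '' {v₁, v₂} := by simp [Set.image_insert_eq]
  simp only [Mon, Set.mem_setOf_eq]
  rw [himg, mem_ideal_span_monomial_image]
  simp [support_monomial]

lemma monN_iff {K : Type*} [Field K] (u : Fin 2 →₀ ℕ) :
    u ∈ Mon (Ideal.span {monomial (ev 0 2) (1:K), monomial (ev 5 0) 1}) ↔
      2 ≤ u 1 ∨ 5 ≤ u 0 := by
  rw [mon_span]; simp only [le2, ev_zero, ev_one]; omega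

lemma monM_iff {K : Type*} [Field K] (u : Fin 2 →₀ ℕ) :
    u ∈ Mon (Ideal.span {monomial (ev 0 5) (1:K), monomial (ev 2 0) 1}) ↔
      5 ≤ u 1 ∨ 2 ≤ u 0 := by
  rw [mon_span]; simp only [le2, ev_zero, ev_one]; omega

lemma distRel_iff (u v : Fin 2 →₀ ℕ) (ℓ : ℤ) :
    DistRel ![1, -1] u v ℓ ↔ ((u 0 : ℤ) - v 0 = ℓ ∧ (u 1 : ℤ) - v 1 = -ℓ) := by
  constructor
  · intro h
    have h0 := h 0
    have h1 := h 1
    simp [Matrix.cons_val_zero, Matrix.cons_val_one, Matrix.head_cons] at h0 h1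
    omega
  · intro ⟨h0, h1⟩ i
    fin_cases i <;>
      simp [Matrix.cons_val_zero, Matrix.cons_val_one, Matrix.head_cons] <;> omega

lemma distRel_of_deg {u v : Fin 2 →₀ ℕ} (h : u 0 + u 1 = v 0 + v 1) :
    DistRel ![1, -1] u v ((u 0 : ℤ) - v 0) :=
  (distRel_iff u v _).mpr ⟨rfl, by omega⟩

end Aux


def cc (t : ℕ) (p : ℕ × ℕ) : ℕ × ℕ :=
  if p = (0,2) then (2,0)
  else if p = (0,3) then (2,1)
  else if p = (1,2) then (3,0)
  else if p = (0,4) then (2,2)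
  else if p = (2,2) then (4,0)
  else if p = (4,0) then (0,4)
  else if p = (1,3) then (3,1)
  else if p = (3,1) then (1,3)
  else if p = (2,0) then (0,2)
  else if p = (2,1) then (0,3)
  else if p = (3,0) then (1,2)
  else if p = (1,4) then (if t = 1 then (3,2) else (2,3))
  else if p = (2,3) then (if t = 0 then (4,1) else if t = 1 then (2,3) else (3,2))
  else if p = (3,2) then (if t = 0 then (3,2) else (4,1))
  else if p = (4,1) then (1,4)
  else p

def cc' (t : ℕ) (p : ℕ × ℕ) : ℕ × ℕ :=
  if p = (2,0) then (0,2)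
  else if p = (2,1) then (0,3)
  else if p = (3,0) then (1,2)
  else if p = (2,2) then (0,4)
  else if p = (4,0) then (2,2)
  else if p = (0,4) then (4,0)
  else if p = (3,1) then (1,3)
  else if p = (1,3) then (3,1)
  else if p = (0,2) then (2,0)
  else if p = (0,3) then (2,1)
  else if p = (1,2) then (3,0)
  else if p = (2,3) then (if t = 1 then (2,3) else (1,4))
  else if p = (3,2) then (if t = 0 then (3,2) else if t = 1 then (1,4) else (2,3))
  else if p = (4,1) then (if t = 0 then (2,3) else (3,2))
  else if p = (1,4) then (4,1)
  else p

set_option maxHeartbeats 1000000 in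
lemma cc_id {t a b : ℕ} (h : 5 ≤ a ∨ 5 ≤ b ∨ 6 ≤ a + b) : cc t (a,b) = (a,b) := by
  have h1 : ∀ x y : ℕ, x ≤ 4 → y ≤ 4 → x + y ≤ 5 → (a, b) ≠ (x, y) := by
    intro x y hx hy hxy he
    rw [Prod.mk.injEq] at he
    omega
  rw [cc, if_neg (h1 0 2 (by norm_num) (by norm_num) (by norm_num)),
    if_neg (h1 0 3 (by norm_num) (by norm_num) (by norm_num)),
    if_neg (h1 1 2 (by norm_num) (by norm_num) (by norm_num)),
    if_neg (h1 0 4 (by norm_num) (by norm_num) (by norm_num)),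
    if_neg (h1 2 2 (by norm_num) (by norm_num) (by norm_num)),
    if_neg (h1 4 0 (by norm_num) (by norm_num) (by norm_num)),
    if_neg (h1 1 3 (by norm_num) (by norm_num) (by norm_num)),
    if_neg (h1 3 1 (by norm_num) (by norm_num) (by norm_num)),
    if_neg (h1 2 0 (by norm_num) (by norm_num) (by norm_num)),
    if_neg (h1 2 1 (by norm_num) (by norm_num) (by norm_num)),
    if_neg (h1 3 0 (by norm_num) (by norm_num) (by norm_num)),
    if_neg (h1 1 4 (by norm_num) (by norm_num) (by norm_num)),
    if_neg (h1 2 3 (by norm_num) (by norm_num) (by norm_num)),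
    if_neg (h1 3 2 (by norm_num) (by norm_num) (by norm_num)),
    if_neg (h1 4 1 (by norm_num) (by norm_num) (by norm_num))]

set_option maxHeartbeats 1000000 in
lemma cc'_id {t a b : ℕ} (h : 5 ≤ a ∨ 5 ≤ b ∨ 6 ≤ a + b) : cc' t (a,b) = (a,b) := by
  have h1 : ∀ x y : ℕ, x ≤ 4 → y ≤ 4 → x + y ≤ 5 → (a, b) ≠ (x, y) := by
    intro x y hx hy hxy he
    rw [Prod.mk.injEq] at he
    omega
  rw [cc', if_neg (h1 2 0 (by norm_num) (by norm_num) (by norm_num)),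
    if_neg (h1 2 1 (by norm_num) (by norm_num) (by norm_num)),
    if_neg (h1 3 0 (by norm_num) (by norm_num) (by norm_num)),
    if_neg (h1 2 2 (by norm_num) (by norm_num) (by norm_num)),
    if_neg (h1 4 0 (by norm_num) (by norm_num) (by norm_num)),
    if_neg (h1 0 4 (by norm_num) (by norm_num) (by norm_num)),
    if_neg (h1 3 1 (by norm_num) (by norm_num) (by norm_num)),
    if_neg (h1 1 3 (by norm_num) (by norm_num) (by norm_num)),
    if_neg (h1 0 2 (by norm_num) (by norm_num) (by norm_num)),
    if_neg (h1 0 3 (by norm_num) (by norm_num) (by norm_num)),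
    if_neg (h1 1 2 (by norm_num) (by norm_num) (by norm_num)),
    if_neg (h1 2 3 (by norm_num) (by norm_num) (by norm_num)),
    if_neg (h1 3 2 (by norm_num) (by norm_num) (by norm_num)),
    if_neg (h1 4 1 (by norm_num) (by norm_num) (by norm_num)),
    if_neg (h1 1 4 (by norm_num) (by norm_num) (by norm_num))]

lemma cc'_cc (t : ℕ) (ht : t < 3) (p : ℕ × ℕ) : cc' t (cc t p) = p := by
  obtain ⟨a, b⟩ := p
  by_cases h : 5 ≤ a ∨ 5 ≤ b
  · rw [cc_id (by omega), cc'_id (by omega)]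
  · exact (by decide : ∀ t < 3, ∀ a < 5, ∀ b < 5, cc' t (cc t (a,b)) = (a,b))
      t ht a (by omega) b (by omega)

lemma cc_cc' (t : ℕ) (ht : t < 3) (p : ℕ × ℕ) : cc t (cc' t p) = p := by
  obtain ⟨a, b⟩ := p
  by_cases h : 5 ≤ a ∨ 5 ≤ b
  · rw [cc'_id (by omega), cc_id (by omega)]
  · exact (by decide : ∀ t < 3, ∀ a < 5, ∀ b < 5, cc t (cc' t (a,b)) = (a,b))
      t ht a (by omega) b (by omega)

lemma cc_deg (t : ℕ) (ht : t < 3) (a b : ℕ) :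
    (cc t (a,b)).1 + (cc t (a,b)).2 = a + b := by
  by_cases h : 5 ≤ a ∨ 5 ≤ b
  · rw [cc_id (by omega)]
  · exact (by decide : ∀ t < 3, ∀ a < 5, ∀ b < 5,
      (cc t (a,b)).1 + (cc t (a,b)).2 = a + b) t ht a (by omega) b (by omega)

set_option synthInstance.maxSize 4000 in
set_option synthInstance.maxHeartbeats 4000000 in
set_option maxHeartbeats 4000000 in
lemma cc_maps (t : ℕ) (ht : t < 3) (a b : ℕ) (h : 2 ≤ b ∨ 5 ≤ a) :
    5 ≤ (cc t (a,b)).2 ∨ 2 ≤ (cc t (a,b)).1 := by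
  by_cases hb : 5 ≤ a ∨ 5 ≤ b
  · rw [cc_id (by omega)]; omega
  · have := (by decide : ∀ t < 3, ∀ a < 5, ∀ b < 5, 2 ≤ b →
      (5 ≤ (cc t (a,b)).2 ∨ 2 ≤ (cc t (a,b)).1)) t ht a (by omega) b (by omega)
    exact this (by omega)

set_option synthInstance.maxSize 4000 in
set_option synthInstance.maxHeartbeats 4000000 in
set_option maxHeartbeats 4000000 in
lemma cc'_maps (t : ℕ) (ht : t < 3) (a b : ℕ) (h : 5 ≤ b ∨ 2 ≤ a) :
    2 ≤ (cc' t (a,b)).2 ∨ 5 ≤ (cc' t (a,b)).1 := by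
  by_cases hb : 5 ≤ a ∨ 5 ≤ b
  · rw [cc'_id (by omega)]; omega
  · have := (by decide : ∀ t < 3, ∀ a < 5, ∀ b < 5, 2 ≤ a →
      (2 ≤ (cc' t (a,b)).2 ∨ 5 ≤ (cc' t (a,b)).1)) t ht a (by omega) b (by omega)
    exact this (by omega)

set_option synthInstance.maxSize 4000 in
set_option synthInstance.maxHeartbeats 4000000 in
set_option maxHeartbeats 4000000 in
lemma cc_lex (t : ℕ) (ht : t < 3) (a b : ℕ) (h : 2 ≤ b ∨ 5 ≤ a) :
    cc t (a,b) = (a,b) ∨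
      ((cc t (a,b)).2 < b ∨ ((cc t (a,b)).2 = b ∧ (cc t (a,b)).1 < a)) := by
  by_cases hb : 5 ≤ a ∨ 5 ≤ b
  · left; exact cc_id (by omega)
  · have := (by decide : ∀ t < 3, ∀ a < 5, ∀ b < 5, 2 ≤ b →
      (cc t (a,b) = (a,b) ∨
        ((cc t (a,b)).2 < b ∨ ((cc t (a,b)).2 = b ∧ (cc t (a,b)).1 < a))))
      t ht a (by omega) b (by omega)
    exact this (by omega)

def nd (x y : ℕ) : ℕ := max x y - min x y

lemma nd_self (x : ℕ) : nd x x = 0 := by simp [nd]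

set_option synthInstance.maxSize 4000 in
set_option synthInstance.maxHeartbeats 4000000 in
set_option maxHeartbeats 4000000 in
lemma cc_c2 (t : ℕ) (ht : t < 3) (a b a' b' : ℕ) (h : 2 ≤ b ∨ 5 ≤ a)
    (h1 : a ≤ a') (h2 : b ≤ b') :
    nd a' (cc t (a',b')).1 ≤ nd a (cc t (a,b)).1 := by
  rcases h with hb | ha
  · by_cases h6 : 6 ≤ a' + b'
    · rw [cc_id (by omega), nd_self]; exact Nat.zero_le _
    · have := (by decide : ∀ t < 3, ∀ a < 4, ∀ b < 6, ∀ a' < 4, ∀ b' < 6, b < 2 ∨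
        a' < a ∨ b' < b ∨ nd a' (cc t (a',b')).1 ≤ nd a (cc t (a,b)).1)
        t ht a (by omega) b (by omega) a' (by omega) b' (by omega)
      omega
  · rw [cc_id (by omega), nd_self, cc_id (by omega), nd_self]

set_option synthInstance.maxSize 4000 in
set_option synthInstance.maxHeartbeats 4000000 in
set_option maxHeartbeats 4000000 in
lemma cc_cap (t : ℕ) (ht : t < 3) (a b : ℕ) (ha : a ≤ 3) (hb : 2 ≤ b) :
    (cc t (a,b)).1 ≤ 4 := by
  by_cases h5 : 5 ≤ b
  · rw [cc_id (by omega)]; omega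
  · exact (by decide : ∀ t < 3, ∀ a < 4, ∀ b < 5, 2 ≤ b → (cc t (a,b)).1 ≤ 4)
      t ht a (by omega) b (by omega) hb

set_option synthInstance.maxSize 4000 in
set_option synthInstance.maxHeartbeats 4000000 in
set_option maxHeartbeats 4000000 in
lemma cc_c3 (t : ℕ) (ht : t < 3) (a b a' b' : ℕ)
    (h : 2 ≤ b ∨ 5 ≤ a) (h' : 2 ≤ b' ∨ 5 ≤ a')
    (m1 : (cc t (a,b)).1 ≤ (cc t (a',b')).1) (m2 : (cc t (a,b)).2 ≤ (cc t (a',b')).2) :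
    nd a' (cc t (a',b')).1 ≤ nd a (cc t (a,b)).1 := by
  by_cases h6 : 6 ≤ a' + b'
  · rw [cc_id (by omega), nd_self]; exact Nat.zero_le _
  · -- a' + b' ≤ 5
    have hdeg := cc_deg t ht a b
    have hdeg' := cc_deg t ht a' b'
    have hab : a + b ≤ a' + b' := by omega
    by_cases ha' : 5 ≤ a'
    · have : a' = 5 ∧ b' = 0 := by omega
      rw [cc_id (by omega), nd_self]; exact Nat.zero_le _
    · have hb' : 2 ≤ b' := by omega
      have ha'3 : a' ≤ 3 := by omega
      rcases h with hb | ha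
      · have ha3 : a ≤ 3 := by omega
        have := (by decide : ∀ t < 3, ∀ a < 4, ∀ b < 6, ∀ a' < 4, ∀ b' < 6,
          b < 2 ∨ b' < 2 ∨ (cc t (a',b')).1 < (cc t (a,b)).1 ∨
          (cc t (a',b')).2 < (cc t (a,b)).2 ∨
          nd a' (cc t (a',b')).1 ≤ nd a (cc t (a,b)).1)
          t ht a (by omega) b (by omega) a' (by omega) b' (by omega)
        omega
      · exfalso
        rw [cc_id (by omega)] at m1
        have := cc_cap t ht a' b' ha'3 hb'
        omega


section FmapSection
open MvPolynomial

lemma abs_sub_natCast (x y : ℕ) (ℓ : ℤ) (h : (x:ℤ) - y = ℓ) : |ℓ| = (nd x y : ℤ) := by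
  rw [Int.abs_eq_natAbs]
  simp only [nd]
  omega

noncomputable def fmap (t : ℕ) (u : Fin 2 →₀ ℕ) : Fin 2 →₀ ℕ :=
  ev (cc t (u 0, u 1)).1 (cc t (u 0, u 1)).2

noncomputable def gmap (t : ℕ) (u : Fin 2 →₀ ℕ) : Fin 2 →₀ ℕ :=
  ev (cc' t (u 0, u 1)).1 (cc' t (u 0, u 1)).2

@[simp] lemma fmap_zero (t : ℕ) (u : Fin 2 →₀ ℕ) : fmap t u 0 = (cc t (u 0, u 1)).1 := by
  simp [fmap]

@[simp] lemma fmap_one (t : ℕ) (u : Fin 2 →₀ ℕ) : fmap t u 1 = (cc t (u 0, u 1)).2 := by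
  simp [fmap]

@[simp] lemma gmap_zero (t : ℕ) (u : Fin 2 →₀ ℕ) : gmap t u 0 = (cc' t (u 0, u 1)).1 := by
  simp [gmap]

@[simp] lemma gmap_one (t : ℕ) (u : Fin 2 →₀ ℕ) : gmap t u 1 = (cc' t (u 0, u 1)).2 := by
  simp [gmap]

lemma fmap_ev (t a b : ℕ) : fmap t (ev a b) = ev (cc t (a,b)).1 (cc t (a,b)).2 := by
  simp [fmap]

lemma gmap_fmap (t : ℕ) (ht : t < 3) (u : Fin 2 →₀ ℕ) : gmap t (fmap t u) = u := by
  have h := cc'_cc t ht (u 0, u 1)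
  refine ext2 ?_ ?_ <;> simp [h]

lemma fmap_gmap (t : ℕ) (ht : t < 3) (u : Fin 2 →₀ ℕ) : fmap t (gmap t u) = u := by
  have h := cc_cc' t ht (u 0, u 1)
  refine ext2 ?_ ?_ <;> simp [h]

lemma fmap_deg (t : ℕ) (ht : t < 3) (u : Fin 2 →₀ ℕ) :
    fmap t u 0 + fmap t u 1 = u 0 + u 1 := by
  simpa using cc_deg t ht (u 0) (u 1)

lemma isArrowMap_fmap {K : Type*} [Field K] (t : ℕ) (ht : t < 3) :
    IsArrowMap (K := K) ![1,-1] LexO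
      (Ideal.span {monomial (ev 0 2) 1, monomial (ev 5 0) 1})
      (Ideal.span {monomial (ev 0 5) 1, monomial (ev 2 0) 1}) (fmap t) := by
  refine ⟨⟨?_, ?_, ?_⟩, ?_, ?_, ?_, ?_⟩
  · -- MapsTo
    intro u hu
    rw [monN_iff] at hu
    rw [monM_iff]
    simpa using cc_maps t ht (u 0) (u 1) hu
  · -- InjOn
    intro u _ v _ h
    have := congrArg (gmap t) h
    rwa [gmap_fmap t ht, gmap_fmap t ht] at this
  · -- SurjOn
    intro v hv
    rw [monM_iff] at hv
    refine ⟨gmap t v, ?_, fmap_gmap t ht v⟩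
    rw [monN_iff]
    simpa using cc'_maps t ht (v 0) (v 1) hv
  · -- SameDeg
    intro u _
    exact ⟨(u 0 : ℤ) - fmap t u 0, distRel_of_deg (fmap_deg t ht u).symm⟩
  · -- Lex
    intro u hu
    rw [monN_iff] at hu
    rcases cc_lex t ht (u 0) (u 1) hu with h | h
    · left
      have : fmap t u = ev (cc t (u 0, u 1)).1 (cc t (u 0, u 1)).2 := rfl
      rw [this, h]
      exact ev_self u
    · right
      simp only [LexO, fmap_zero, fmap_one]
      exact h
  · -- condition (2)
    intro u hu w ℓ ℓ' hd hd'
    rw [monN_iff] at hu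
    rw [distRel_iff] at hd hd'
    have e1 : |ℓ| = (nd (u 0) (fmap t u 0) : ℤ) := abs_sub_natCast _ _ _ hd.1
    have e2 : |ℓ'| = (nd ((u+w) 0) (fmap t (u+w) 0) : ℤ) := abs_sub_natCast _ _ _ hd'.1
    rw [e1, e2, Nat.cast_le, fmap_zero, fmap_zero]
    exact cc_c2 t ht (u 0) (u 1) ((u+w) 0) ((u+w) 1) hu
      (by rw [Finsupp.add_apply]; exact Nat.le_add_right _ _) (by rw [Finsupp.add_apply]; exact Nat.le_add_right _ _)
  · -- condition (3)
    intro u hu u' hu' w ℓ ℓ' heq hd hd'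
    rw [monN_iff] at hu hu'
    rw [distRel_iff] at hd hd'
    have e1 : |ℓ| = (nd (u 0) (fmap t u 0) : ℤ) := abs_sub_natCast _ _ _ hd.1
    have e2 : |ℓ'| = (nd (u' 0) (fmap t u' 0) : ℤ) := abs_sub_natCast _ _ _ hd'.1
    have m1 : fmap t u 0 ≤ fmap t u' 0 := by
      rw [heq, Finsupp.add_apply]; exact Nat.le_add_right _ _
    have m2 : fmap t u 1 ≤ fmap t u' 1 := by
      rw [heq, Finsupp.add_apply]; exact Nat.le_add_right _ _
    rw [e1, e2, Nat.cast_le, fmap_zero, fmap_zero]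
    refine cc_c3 t ht (u 0) (u 1) (u' 0) (u' 1) hu hu' ?_ ?_
    · simpa using m1
    · simpa using m2

lemma forced_fmap {K : Type*} [Field K] (t : ℕ) (ht : t < 3) :
    ForcedValues (Ideal.span {monomial (ev 0 2) (1:K), monomial (ev 5 0) 1}) (fmap t) := by
  have e : ∀ a b p q : ℕ, cc t (a,b) = (p,q) → fmap t (ev a b) = ev p q := by
    intro a b p q h
    rw [fmap_ev, h]
  refine ⟨e 0 2 2 0 ?_, e 0 3 2 1 ?_, e 1 2 3 0 ?_, e 0 4 2 2 ?_, e 1 3 3 1 ?_,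
    e 2 2 4 0 ?_, e 0 5 0 5 ?_, e 5 0 5 0 ?_, ?_⟩
  · exact (by decide : ∀ t < 3, cc t (0,2) = (2,0)) t ht
  · exact (by decide : ∀ t < 3, cc t (0,3) = (2,1)) t ht
  · exact (by decide : ∀ t < 3, cc t (1,2) = (3,0)) t ht
  · exact (by decide : ∀ t < 3, cc t (0,4) = (2,2)) t ht
  · exact (by decide : ∀ t < 3, cc t (1,3) = (3,1)) t ht
  · exact (by decide : ∀ t < 3, cc t (2,2) = (4,0)) t ht
  · exact cc_id (by omega)
  · exact cc_id (by omega)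
  · intro u _ h6
    have : fmap t u = ev (cc t (u 0, u 1)).1 (cc t (u 0, u 1)).2 := rfl
    rw [this, cc_id (by omega)]
    exact ev_self u

lemma caseI_fmap : CaseI (fmap 0) := by
  refine ⟨?_, ?_, ?_⟩ <;> rw [fmap_ev]
  · rw [(by decide : cc 0 (1,4) = (2,3))]
  · rw [(by decide : cc 0 (2,3) = (4,1))]
  · rw [(by decide : cc 0 (3,2) = (3,2))]

lemma caseII_fmap : CaseII (fmap 1) := by
  refine ⟨?_, ?_, ?_⟩ <;> rw [fmap_ev]
  · rw [(by decide : cc 1 (1,4) = (3,2))]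
  · rw [(by decide : cc 1 (2,3) = (2,3))]
  · rw [(by decide : cc 1 (3,2) = (4,1))]

lemma caseIII_fmap : CaseIII (fmap 2) := by
  refine ⟨?_, ?_, ?_⟩ <;> rw [fmap_ev]
  · rw [(by decide : cc 2 (1,4) = (2,3))]
  · rw [(by decide : cc 2 (2,3) = (3,2))]
  · rw [(by decide : cc 2 (3,2) = (4,1))]

end FmapSection


section ForwardSection
open MvPolynomial

set_option maxHeartbeats 2000000 in
lemma forward_arrow {K : Type*} [Field K]
    (f : (Fin 2 →₀ ℕ) → (Fin 2 →₀ ℕ))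
    (h : IsArrowMap ![1,-1] LexO
      (Ideal.span {monomial (ev 0 2) (1:K), monomial (ev 5 0) 1})
      (Ideal.span {monomial (ev 0 5) (1:K), monomial (ev 2 0) 1}) f) :
    ForcedValues (Ideal.span {monomial (ev 0 2) (1:K), monomial (ev 5 0) 1}) f ∧
      ((CaseI f ∧ ¬ CaseII f ∧ ¬ CaseIII f) ∨
       (CaseII f ∧ ¬ CaseI f ∧ ¬ CaseIII f) ∨
       (CaseIII f ∧ ¬ CaseI f ∧ ¬ CaseII f)) := by
  obtain ⟨hbij, hdeg, hlex, h2, _h3⟩ := h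
  have hfm : ∀ u : Fin 2 →₀ ℕ, 2 ≤ u 1 ∨ 5 ≤ u 0 →
      (5 ≤ f u 1 ∨ 2 ≤ f u 0) ∧ f u 0 + f u 1 = u 0 + u 1 := by
    intro u hu
    have hu' := (monN_iff (K := K) u).mpr hu
    have h1 := hbij.mapsTo hu'
    rw [monM_iff] at h1
    obtain ⟨ℓ, hd⟩ := hdeg u hu'
    rw [distRel_iff] at hd
    exact ⟨h1, by omega⟩
  have hinj : ∀ u v : Fin 2 →₀ ℕ, 2 ≤ u 1 ∨ 5 ≤ u 0 → 2 ≤ v 1 ∨ 5 ≤ v 0 →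
      f u = f v → u = v := fun u v hu hv he =>
    hbij.injOn ((monN_iff u).mpr hu) ((monN_iff v).mpr hv) he
  have hsurj : ∀ v : Fin 2 →₀ ℕ, 5 ≤ v 1 ∨ 2 ≤ v 0 →
      ∃ u : Fin 2 →₀ ℕ, (2 ≤ u 1 ∨ 5 ≤ u 0) ∧ f u = v ∧ u 0 + u 1 = v 0 + v 1 := by
    intro v hv
    obtain ⟨u, hu, hfu⟩ := hbij.surjOn ((monM_iff v).mpr hv)
    have hu' := (monN_iff (K := K) u).mp hu
    have hd := (hfm u hu').2
    rw [hfu] at hd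
    exact ⟨u, hu', hfu, by omega⟩
  have step2 : ∀ u u' : Fin 2 →₀ ℕ, (2 ≤ u 1 ∨ 5 ≤ u 0) → u 0 ≤ u' 0 → u 1 ≤ u' 1 →
      ((u' 0 : ℤ) - f u' 0).natAbs ≤ ((u 0 : ℤ) - f u 0).natAbs := by
    intro u u' hu h0 h1
    have huN := (monN_iff (K := K) u).mpr hu
    have hu' : 2 ≤ u' 1 ∨ 5 ≤ u' 0 := by omega
    have hw : u' = u + ev (u' 0 - u 0) (u' 1 - u 1) :=
      ext2 (by rw [Finsupp.add_apply, ev_zero]; omega)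
        (by rw [Finsupp.add_apply, ev_one]; omega)
    have d1 : DistRel ![1,-1] u (f u) ((u 0 : ℤ) - f u 0) :=
      distRel_of_deg (hfm u hu).2.symm
    have d2 : DistRel ![1,-1] u' (f u') ((u' 0 : ℤ) - f u' 0) :=
      distRel_of_deg (hfm u' hu').2.symm
    have key := h2 u huN (ev (u' 0 - u 0) (u' 1 - u 1)) ((u 0 : ℤ) - f u 0)
      ((u' 0 : ℤ) - f u' 0) d1 (by rw [← hw]; exact d2)
    rwa [Int.abs_eq_natAbs, Int.abs_eq_natAbs, Nat.cast_le] at key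
  have mN : ∀ a b : ℕ, 2 ≤ b ∨ 5 ≤ a →
      ev a b ∈ Mon (Ideal.span {monomial (ev 0 2) (1:K), monomial (ev 5 0) 1}) := by
    intro a b hab
    rw [monN_iff]
    simpa using hab
  have getv : ∀ a b : ℕ, 2 ≤ b ∨ 5 ≤ a →
      ∃ p q : ℕ, f (ev a b) = ev p q ∧ p + q = a + b ∧ (5 ≤ q ∨ 2 ≤ p) := by
    intro a b hab
    have hh := hfm (ev a b) (by simpa using hab)
    exact ⟨f (ev a b) 0, f (ev a b) 1, (ev_self _).symm, by simpa using hh.2,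
      by simpa using hh.1⟩
  -- degree 2
  have h02 : f (ev 0 2) = ev 2 0 := by
    obtain ⟨u, hu, hfu, hd2⟩ := hsurj (ev 2 0) (by simp)
    simp only [ev_zero, ev_one] at hd2
    have heq : u = ev 0 2 := ext2 (by simp; omega) (by simp; omega)
    rw [← heq]; exact hfu
  -- degree 3
  have h03 : f (ev 0 3) = ev 2 1 := by
    obtain ⟨p, q, hfv, hs, hm⟩ := getv 0 3 (by omega)
    have hb := step2 (ev 0 2) (ev 0 3) (by simp) (by simp) (by simp)
    rw [h02, hfv] at hb
    simp only [ev_zero, ev_one] at hb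
    obtain ⟨hp, hq⟩ : p = 2 ∧ q = 1 := by omega
    subst hp; subst hq; exact hfv
  have h12 : f (ev 1 2) = ev 3 0 := by
    obtain ⟨u, hu, hfu, hd3⟩ := hsurj (ev 3 0) (by simp)
    simp only [ev_zero, ev_one] at hd3
    rcases (by omega : (u 0 = 0 ∧ u 1 = 3) ∨ (u 0 = 1 ∧ u 1 = 2)) with ⟨ha, hb⟩ | ⟨ha, hb⟩
    · exfalso
      have heq : u = ev 0 3 := ext2 (by simp [ha]) (by simp [hb])
      rw [heq, h03] at hfu
      exact absurd (evinj hfu).1 (by omega)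
    · have heq : u = ev 1 2 := ext2 (by simp [ha]) (by simp [hb])
      rw [← heq]; exact hfu
  -- degree 4
  have h04 : f (ev 0 4) = ev 2 2 := by
    obtain ⟨p, q, hfv, hs, hm⟩ := getv 0 4 (by omega)
    have hb := step2 (ev 0 3) (ev 0 4) (by simp) (by simp) (by simp)
    rw [h03, hfv] at hb
    simp only [ev_zero, ev_one] at hb
    obtain ⟨hp, hq⟩ : p = 2 ∧ q = 2 := by omega
    subst hp; subst hq; exact hfv
  have h13 : f (ev 1 3) = ev 3 1 := by
    obtain ⟨p, q, hfv, hs, hm⟩ := getv 1 3 (by omega)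
    have hb := step2 (ev 0 3) (ev 1 3) (by simp) (by simp) (by simp)
    rw [h03, hfv] at hb
    simp only [ev_zero, ev_one] at hb
    rcases (by omega : (p = 3 ∧ q = 1) ∨ (p = 2 ∧ q = 2)) with ⟨hp, hq⟩ | ⟨hp, hq⟩
    · subst hp; subst hq; exact hfv
    · exfalso
      subst hp; subst hq
      have heq := hinj (ev 1 3) (ev 0 4) (by simp) (by simp) (hfv.trans h04.symm)
      exact absurd (evinj heq).1 (by omega)
  have h22 : f (ev 2 2) = ev 4 0 := by
    obtain ⟨u, hu, hfu, hd4⟩ := hsurj (ev 4 0) (by simp)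
    simp only [ev_zero, ev_one] at hd4
    rcases (by omega : (u 0 = 0 ∧ u 1 = 4) ∨ (u 0 = 1 ∧ u 1 = 3) ∨ (u 0 = 2 ∧ u 1 = 2))
      with ⟨ha, hb⟩ | ⟨ha, hb⟩ | ⟨ha, hb⟩
    · exfalso
      have heq : u = ev 0 4 := ext2 (by simp [ha]) (by simp [hb])
      rw [heq, h04] at hfu
      exact absurd (evinj hfu).1 (by omega)
    · exfalso
      have heq : u = ev 1 3 := ext2 (by simp [ha]) (by simp [hb])
      rw [heq, h13] at hfu
      exact absurd (evinj hfu).1 (by omega)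
    · have heq : u = ev 2 2 := ext2 (by simp [ha]) (by simp [hb])
      rw [← heq]; exact hfu
  -- two extreme degree-5 values
  have h50 : f (ev 5 0) = ev 5 0 := by
    obtain ⟨p, q, hfv, hs, hm⟩ := getv 5 0 (by omega)
    rcases hlex (ev 5 0) (mN 5 0 (by omega)) with he | hl
    · exact he
    · exfalso
      rw [hfv] at hl
      simp only [LexO, ev_zero, ev_one] at hl
      omega
  have h05 : f (ev 0 5) = ev 0 5 := by
    obtain ⟨u, hu, hfu, hd5⟩ := hsurj (ev 0 5) (by simp)
    simp only [ev_zero, ev_one] at hd5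
    rcases hlex u ((monN_iff u).mpr hu) with he | hl
    · have heq : u = ev 0 5 := he.symm.trans hfu
      rw [← heq]; exact he
    · exfalso
      rw [hfu] at hl
      simp only [LexO, ev_zero, ev_one] at hl
      omega
  -- identity in high degrees
  have h5b : ∀ u : Fin 2 →₀ ℕ, (2 ≤ u 1 ∨ 5 ≤ u 0) → 5 ≤ u 1 → f u = u := by
    intro u hu h5
    have hb := step2 (ev 0 5) u (by simp) (by simp) (by simpa using h5)
    rw [h05] at hb
    simp only [ev_zero, ev_one] at hb
    have hdd := (hfm u hu).2
    exact ext2 (by omega) (by omega)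
  have h5a : ∀ u : Fin 2 →₀ ℕ, (2 ≤ u 1 ∨ 5 ≤ u 0) → 5 ≤ u 0 → f u = u := by
    intro u hu h5
    have hb := step2 (ev 5 0) u (by simp) (by simpa using h5) (by simp)
    rw [h50] at hb
    simp only [ev_zero, ev_one] at hb
    have hdd := (hfm u hu).2
    exact ext2 (by omega) (by omega)
  have hfix : ∀ a b : ℕ, 5 ≤ a → f (ev a b) = ev a b := by
    intro a b ha
    exact h5a (ev a b) (by simp; omega) (by simpa using ha)
  have hu42 : f (ev 4 2) = ev 4 2 := by
    obtain ⟨p, q, hfv, hs, hm⟩ := getv 4 2 (by omega)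
    rcases hlex (ev 4 2) (mN 4 2 (by omega)) with he | hl
    · exact he
    · exfalso
      rw [hfv] at hl
      simp only [LexO, ev_zero, ev_one] at hl
      rcases (by omega : (p = 5 ∧ q = 1) ∨ (p = 6 ∧ q = 0)) with ⟨hp, hq⟩ | ⟨hp, hq⟩ <;>
        subst hp <;> subst hq
      · have heq := hinj (ev 4 2) (ev 5 1) (by simp) (by simp)
          (hfv.trans (hfix 5 1 (by omega)).symm)
        exact absurd (evinj heq).1 (by omega)
      · have heq := hinj (ev 4 2) (ev 6 0) (by simp) (by simp)
          (hfv.trans (hfix 6 0 (by omega)).symm)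
        exact absurd (evinj heq).1 (by omega)
  have hu33 : f (ev 3 3) = ev 3 3 := by
    obtain ⟨p, q, hfv, hs, hm⟩ := getv 3 3 (by omega)
    rcases hlex (ev 3 3) (mN 3 3 (by omega)) with he | hl
    · exact he
    · exfalso
      rw [hfv] at hl
      simp only [LexO, ev_zero, ev_one] at hl
      rcases (by omega : (p = 4 ∧ q = 2) ∨ (p = 5 ∧ q = 1) ∨ (p = 6 ∧ q = 0))
        with ⟨hp, hq⟩ | ⟨hp, hq⟩ | ⟨hp, hq⟩ <;> subst hp <;> subst hq
      · have heq := hinj (ev 3 3) (ev 4 2) (by simp) (by simp) (hfv.trans hu42.symm)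
        exact absurd (evinj heq).1 (by omega)
      · have heq := hinj (ev 3 3) (ev 5 1) (by simp) (by simp)
          (hfv.trans (hfix 5 1 (by omega)).symm)
        exact absurd (evinj heq).1 (by omega)
      · have heq := hinj (ev 3 3) (ev 6 0) (by simp) (by simp)
          (hfv.trans (hfix 6 0 (by omega)).symm)
        exact absurd (evinj heq).1 (by omega)
  have hu24 : f (ev 2 4) = ev 2 4 := by
    obtain ⟨p, q, hfv, hs, hm⟩ := getv 2 4 (by omega)
    rcases hlex (ev 2 4) (mN 2 4 (by omega)) with he | hl
    · exact he
    · exfalso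
      rw [hfv] at hl
      simp only [LexO, ev_zero, ev_one] at hl
      rcases (by omega : (p = 3 ∧ q = 3) ∨ (p = 4 ∧ q = 2) ∨ (p = 5 ∧ q = 1) ∨
          (p = 6 ∧ q = 0)) with ⟨hp, hq⟩ | ⟨hp, hq⟩ | ⟨hp, hq⟩ | ⟨hp, hq⟩ <;>
        subst hp <;> subst hq
      · have heq := hinj (ev 2 4) (ev 3 3) (by simp) (by simp) (hfv.trans hu33.symm)
        exact absurd (evinj heq).1 (by omega)
      · have heq := hinj (ev 2 4) (ev 4 2) (by simp) (by simp) (hfv.trans hu42.symm)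
        exact absurd (evinj heq).1 (by omega)
      · have heq := hinj (ev 2 4) (ev 5 1) (by simp) (by simp)
          (hfv.trans (hfix 5 1 (by omega)).symm)
        exact absurd (evinj heq).1 (by omega)
      · have heq := hinj (ev 2 4) (ev 6 0) (by simp) (by simp)
          (hfv.trans (hfix 6 0 (by omega)).symm)
        exact absurd (evinj heq).1 (by omega)
  have hu43 : f (ev 4 3) = ev 4 3 := by
    obtain ⟨p, q, hfv, hs, hm⟩ := getv 4 3 (by omega)
    rcases hlex (ev 4 3) (mN 4 3 (by omega)) with he | hl
    · exact he
    · exfalso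
      rw [hfv] at hl
      simp only [LexO, ev_zero, ev_one] at hl
      rcases (by omega : (p = 5 ∧ q = 2) ∨ (p = 6 ∧ q = 1) ∨ (p = 7 ∧ q = 0))
        with ⟨hp, hq⟩ | ⟨hp, hq⟩ | ⟨hp, hq⟩ <;> subst hp <;> subst hq
      · have heq := hinj (ev 4 3) (ev 5 2) (by simp) (by simp)
          (hfv.trans (hfix 5 2 (by omega)).symm)
        exact absurd (evinj heq).1 (by omega)
      · have heq := hinj (ev 4 3) (ev 6 1) (by simp) (by simp)
          (hfv.trans (hfix 6 1 (by omega)).symm)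
        exact absurd (evinj heq).1 (by omega)
      · have heq := hinj (ev 4 3) (ev 7 0) (by simp) (by simp)
          (hfv.trans (hfix 7 0 (by omega)).symm)
        exact absurd (evinj heq).1 (by omega)
  have hu34 : f (ev 3 4) = ev 3 4 := by
    obtain ⟨p, q, hfv, hs, hm⟩ := getv 3 4 (by omega)
    rcases hlex (ev 3 4) (mN 3 4 (by omega)) with he | hl
    · exact he
    · exfalso
      rw [hfv] at hl
      simp only [LexO, ev_zero, ev_one] at hl
      rcases (by omega : (p = 4 ∧ q = 3) ∨ (p = 5 ∧ q = 2) ∨ (p = 6 ∧ q = 1) ∨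
          (p = 7 ∧ q = 0)) with ⟨hp, hq⟩ | ⟨hp, hq⟩ | ⟨hp, hq⟩ | ⟨hp, hq⟩ <;>
        subst hp <;> subst hq
      · have heq := hinj (ev 3 4) (ev 4 3) (by simp) (by simp) (hfv.trans hu43.symm)
        exact absurd (evinj heq).1 (by omega)
      · have heq := hinj (ev 3 4) (ev 5 2) (by simp) (by simp)
          (hfv.trans (hfix 5 2 (by omega)).symm)
        exact absurd (evinj heq).1 (by omega)
      · have heq := hinj (ev 3 4) (ev 6 1) (by simp) (by simp)
          (hfv.trans (hfix 6 1 (by omega)).symm)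
        exact absurd (evinj heq).1 (by omega)
      · have heq := hinj (ev 3 4) (ev 7 0) (by simp) (by simp)
          (hfv.trans (hfix 7 0 (by omega)).symm)
        exact absurd (evinj heq).1 (by omega)
  have hu44 : f (ev 4 4) = ev 4 4 := by
    obtain ⟨p, q, hfv, hs, hm⟩ := getv 4 4 (by omega)
    rcases hlex (ev 4 4) (mN 4 4 (by omega)) with he | hl
    · exact he
    · exfalso
      rw [hfv] at hl
      simp only [LexO, ev_zero, ev_one] at hl
      rcases (by omega : (p = 5 ∧ q = 3) ∨ (p = 6 ∧ q = 2) ∨ (p = 7 ∧ q = 1) ∨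
          (p = 8 ∧ q = 0)) with ⟨hp, hq⟩ | ⟨hp, hq⟩ | ⟨hp, hq⟩ | ⟨hp, hq⟩ <;>
        subst hp <;> subst hq
      · have heq := hinj (ev 4 4) (ev 5 3) (by simp) (by simp)
          (hfv.trans (hfix 5 3 (by omega)).symm)
        exact absurd (evinj heq).1 (by omega)
      · have heq := hinj (ev 4 4) (ev 6 2) (by simp) (by simp)
          (hfv.trans (hfix 6 2 (by omega)).symm)
        exact absurd (evinj heq).1 (by omega)
      · have heq := hinj (ev 4 4) (ev 7 1) (by simp) (by simp)
          (hfv.trans (hfix 7 1 (by omega)).symm)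
        exact absurd (evinj heq).1 (by omega)
      · have heq := hinj (ev 4 4) (ev 8 0) (by simp) (by simp)
          (hfv.trans (hfix 8 0 (by omega)).symm)
        exact absurd (evinj heq).1 (by omega)
  have hbig : ∀ u : Fin 2 →₀ ℕ, (2 ≤ u 1 ∨ 5 ≤ u 0) → 6 ≤ u 0 + u 1 → f u = u := by
    intro u hu h6
    rcases le_or_gt 5 (u 1) with h5 | hb1
    · exact h5b u hu h5
    rcases le_or_gt 5 (u 0) with h5 | hb0
    · exact h5a u hu h5
    have hrw : ∀ a b : ℕ, u 0 = a → u 1 = b → f (ev a b) = ev a b → f u = u := by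
      intro a b ha hb hf
      have heq : u = ev a b := ext2 (by simp [ha]) (by simp [hb])
      rw [heq]; exact hf
    rcases (by omega : (u 0 = 4 ∧ u 1 = 2) ∨ (u 0 = 3 ∧ u 1 = 3) ∨ (u 0 = 2 ∧ u 1 = 4) ∨
        (u 0 = 4 ∧ u 1 = 3) ∨ (u 0 = 3 ∧ u 1 = 4) ∨ (u 0 = 4 ∧ u 1 = 4))
      with ⟨ha, hb⟩ | ⟨ha, hb⟩ | ⟨ha, hb⟩ | ⟨ha, hb⟩ | ⟨ha, hb⟩ | ⟨ha, hb⟩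
    exacts [hrw _ _ ha hb hu42, hrw _ _ ha hb hu33, hrw _ _ ha hb hu24,
      hrw _ _ ha hb hu43, hrw _ _ ha hb hu34, hrw _ _ ha hb hu44]
  -- the middle degree-5 monomials
  have h14opts : f (ev 1 4) = ev 2 3 ∨ f (ev 1 4) = ev 3 2 := by
    obtain ⟨p, q, hfv, hs, hm⟩ := getv 1 4 (by omega)
    have hb := step2 (ev 0 4) (ev 1 4) (by simp) (by simp) (by simp)
    rw [h04, hfv] at hb
    simp only [ev_zero, ev_one] at hb
    rcases hlex (ev 1 4) (mN 1 4 (by omega)) with he | hl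
    · exfalso
      have := evinj (hfv.symm.trans he)
      omega
    · rw [hfv] at hl
      simp only [LexO, ev_zero, ev_one] at hl
      rcases (by omega : (p = 2 ∧ q = 3) ∨ (p = 3 ∧ q = 2)) with ⟨hp, hq⟩ | ⟨hp, hq⟩ <;>
        subst hp <;> subst hq
      · exact Or.inl hfv
      · exact Or.inr hfv
  have h23opts : f (ev 2 3) = ev 2 3 ∨ f (ev 2 3) = ev 3 2 ∨ f (ev 2 3) = ev 4 1 := by
    obtain ⟨p, q, hfv, hs, hm⟩ := getv 2 3 (by omega)
    have hb := step2 (ev 1 3) (ev 2 3) (by simp) (by simp) (by simp)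
    rw [h13, hfv] at hb
    simp only [ev_zero, ev_one] at hb
    rcases hlex (ev 2 3) (mN 2 3 (by omega)) with he | hl
    · exact Or.inl he
    · rw [hfv] at hl
      simp only [LexO, ev_zero, ev_one] at hl
      rcases (by omega : (p = 3 ∧ q = 2) ∨ (p = 4 ∧ q = 1)) with ⟨hp, hq⟩ | ⟨hp, hq⟩ <;>
        subst hp <;> subst hq
      · exact Or.inr (Or.inl hfv)
      · exact Or.inr (Or.inr hfv)
  have h32opts : f (ev 3 2) = ev 3 2 ∨ f (ev 3 2) = ev 4 1 := by
    obtain ⟨p, q, hfv, hs, hm⟩ := getv 3 2 (by omega)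
    rcases hlex (ev 3 2) (mN 3 2 (by omega)) with he | hl
    · exact Or.inl he
    · rw [hfv] at hl
      simp only [LexO, ev_zero, ev_one] at hl
      rcases (by omega : (p = 4 ∧ q = 1) ∨ (p = 5 ∧ q = 0)) with ⟨hp, hq⟩ | ⟨hp, hq⟩ <;>
        subst hp <;> subst hq
      · exact Or.inr hfv
      · exfalso
        have heq := hinj (ev 3 2) (ev 5 0) (by simp) (by simp) (hfv.trans h50.symm)
        exact absurd (evinj heq).1 (by omega)
  have hforced : ForcedValues (Ideal.span {monomial (ev 0 2) (1:K), monomial (ev 5 0) 1}) f :=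
    ⟨h02, h03, h12, h04, h13, h22, h05, h50,
      fun u hu h6 => hbig u ((monN_iff u).mp hu) h6⟩
  refine ⟨hforced, ?_⟩
  have contraI : ∀ a b a' b' p q p' q' : ℕ, f (ev a b) = ev p q → f (ev a' b') = ev p' q' →
      (2 ≤ b ∨ 5 ≤ a) → (2 ≤ b' ∨ 5 ≤ a') → p = p' → q = q' → ¬(a = a' ∧ b = b') → False := by
    intro a b a' b' p q p' q' hab hab' hmb hmb' hp hq hne
    subst hp; subst hq
    have heq := hinj (ev a b) (ev a' b') (by simpa using hmb) (by simpa using hmb')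
      (hab.trans hab'.symm)
    exact hne (evinj heq)
  rcases h14opts with h14 | h14
  · rcases h23opts with h23 | h23 | h23
    · exact absurd (contraI 1 4 2 3 2 3 2 3 h14 h23 (by omega) (by omega) rfl rfl
        (by omega)) (by simp)
    · -- Case III
      rcases h32opts with h32 | h32
      · exact absurd (contraI 2 3 3 2 3 2 3 2 h23 h32 (by omega) (by omega) rfl rfl
          (by omega)) (by simp)
      · refine Or.inr (Or.inr ⟨⟨h14, h23, h32⟩, ?_, ?_⟩)
        · rintro ⟨c1, c2, c3⟩
          exact absurd (evinj (c2.symm.trans h23)).1 (by omega)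
        · rintro ⟨c1, c2, c3⟩
          exact absurd (evinj (c1.symm.trans h14)).1 (by omega)
    · -- Case I
      rcases h32opts with h32 | h32
      · refine Or.inl ⟨⟨h14, h23, h32⟩, ?_, ?_⟩
        · rintro ⟨c1, c2, c3⟩
          exact absurd (evinj (c1.symm.trans h14)).1 (by omega)
        · rintro ⟨c1, c2, c3⟩
          exact absurd (evinj (c2.symm.trans h23)).1 (by omega)
      · exact absurd (contraI 2 3 3 2 4 1 4 1 h23 h32 (by omega) (by omega) rfl rfl
          (by omega)) (by simp)
  · rcases h32opts with h32 | h32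
    · exact absurd (contraI 1 4 3 2 3 2 3 2 h14 h32 (by omega) (by omega) rfl rfl
        (by omega)) (by simp)
    · rcases h23opts with h23 | h23 | h23
      · -- Case II
        refine Or.inr (Or.inl ⟨⟨h14, h23, h32⟩, ?_, ?_⟩)
        · rintro ⟨c1, c2, c3⟩
          exact absurd (evinj (c1.symm.trans h14)).1 (by omega)
        · rintro ⟨c1, c2, c3⟩
          exact absurd (evinj (c2.symm.trans h23)).1 (by omega)
      · exact absurd (contraI 1 4 2 3 3 2 3 2 h14 h23 (by omega) (by omega) rfl rfl
          (by omega)) (by simp)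
      · exact absurd (contraI 2 3 3 2 4 1 4 1 h23 h32 (by omega) (by omega) rfl rfl
          (by omega)) (by simp)
end ForwardSection


/-- (Example 3.8.)  For the grading of `K[x,y]` by `ℤ²/ℤ(1,−1)` and
the lexicographic order `≺` with `x ≺ y`, there are exactly three arrow maps between
the monomial ideals `M = ⟨y⁵, x²⟩` and `N = ⟨y², x⁵⟩`.  (Since an arrow map must
satisfy `m ⪰ f(m)`, such maps necessarily have domain `Mon N` and codomain `Mon M`.)
Every such map takes the forced values listed in `ForcedValues`, and on the remaining
degree-`5` monomials it is given by exactly one of the three cases (i)–(iii); each case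
does occur. -/
theorem exactly_three_arrow_maps {K : Type*} [Field K]
    (c : Fin 2 → ℤ) (hc : c = ![1, -1])
    (M N : Ideal (MvPolynomial (Fin 2) K))
    (hM : M = Ideal.span {monomial (ev 0 5) 1, monomial (ev 2 0) 1})
    (hN : N = Ideal.span {monomial (ev 0 2) 1, monomial (ev 5 0) 1}) :
    (∀ f : (Fin 2 →₀ ℕ) → (Fin 2 →₀ ℕ), IsArrowMap c LexO N M f →
      ForcedValues N f ∧
        ((CaseI f ∧ ¬ CaseII f ∧ ¬ CaseIII f) ∨
         (CaseII f ∧ ¬ CaseI f ∧ ¬ CaseIII f) ∨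
         (CaseIII f ∧ ¬ CaseI f ∧ ¬ CaseII f))) ∧
    (∃ f, IsArrowMap c LexO N M f ∧ ForcedValues N f ∧ CaseI f) ∧
    (∃ f, IsArrowMap c LexO N M f ∧ ForcedValues N f ∧ CaseII f) ∧
    (∃ f, IsArrowMap c LexO N M f ∧ ForcedValues N f ∧ CaseIII f) := by
  subst hc; subst hM; subst hN
  exact ⟨fun f hf => forward_arrow f hf,
    ⟨fmap 0, isArrowMap_fmap 0 (by norm_num), forced_fmap 0 (by norm_num), caseI_fmap⟩,
    ⟨fmap 1, isArrowMap_fmap 1 (by norm_num), forced_fmap 1 (by norm_num), caseII_fmap⟩,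
    ⟨fmap 2, isArrowMap_fmap 2 (by norm_num), forced_fmap 2 (by norm_num), caseIII_fmap⟩⟩
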